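/- Let (X₁,p₁,Γ) be an F₁-graph bundle and (X₂,p₂,Γ) an F₂-graph bundle over the same base Γ. Then the triple (X₁ ⊞ X₂, (p₁,p₂), Γ) is an (F₁ □ F₂)-graph bundle, where F₁ □ F₂ is the Cartesian product of the fibers. -/

import Mathlib

open Classical Matrix Kronecker

universe u

noncomputable section

/-- A morphism of graphs: adjacent vertices are mapped to adjacent or equal vertices. -/
def IsGraphMorphism {V W : Type*} (G : SimpleGraph V) (H : SimpleGraph W) (f : V → W) : Prop :=
  ∀ ⦃a b : V⦄, G.Adj a b → H.Adj (f a) (f b) ∨ f a = f b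

/-- The graph `X̃` obtained from `X` by deleting the edges lying inside fibers of `p`. -/
def delFiberEdges {VX VB : Type*} (X : SimpleGraph VX) (p : VX → VB) : SimpleGraph VX where
  Adj a b := X.Adj a b ∧ p a ≠ p b
  symm := by
    constructor
    intro a b h
    exact ⟨h.1.symm, Ne.symm h.2⟩
  loopless := by
    constructor
    intro a h
    exact X.irrefl h.1

/-- `(X, p, B)` is an `F`-graph bundle. -/
structure IsGraphBundle {VF VX VB : Type*} (F : SimpleGraph VF) (X : SimpleGraph VX)
    (p : VX → VB) (B : SimpleGraph VB) : Prop where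
  morphism : IsGraphMorphism X B p
  surj : Function.Surjective p
  fiber_iso : ∀ v : VB, Nonempty ((X.induce (p ⁻¹' {v})) ≃g F)
  fiber_card : ∀ v : VB, Nat.card (p ⁻¹' {v}) = Nat.card VF
  covering : ∀ x : VX,
    Set.BijOn p ((delFiberEdges X p).neighborSet x) (B.neighborSet (p x))
  transport : ∀ ⦃v w : VB⦄, B.Adj v w →
    ∃ ψ : (X.induce (p ⁻¹' {v})) ≃g (X.induce (p ⁻¹' {w})),
      ∀ x : (p ⁻¹' {v}), X.Adj x.1 (ψ x).1

/-- Vertices of the pullback graph. -/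
abbrev PullbackVert {VB VX VC : Type*} (f : VB → VC) (p : VX → VC) :=
  {a : VB × VX // f a.1 = p a.2}

/-- The total space of the pullback of the bundle `(X, p, C)` along `f : B → C`. -/
def pullbackGraph {VB VX VC : Type*} (B : SimpleGraph VB) (X : SimpleGraph VX)
    (f : VB → VC) (p : VX → VC) (C : SimpleGraph VC) :
    SimpleGraph (PullbackVert f p) where
  Adj a b :=
    (a.1.1 = b.1.1 ∧ X.Adj a.1.2 b.1.2) ∨
    (B.Adj a.1.1 b.1.1 ∧ f a.1.1 = f b.1.1 ∧ a.1.2 = b.1.2) ∨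
    (B.Adj a.1.1 b.1.1 ∧ C.Adj (f a.1.1) (f b.1.1) ∧ X.Adj a.1.2 b.1.2)
  symm := by
    constructor
    rintro a b (⟨h1, h2⟩ | ⟨h1, h2, h3⟩ | ⟨h1, h2, h3⟩)
    · exact Or.inl ⟨h1.symm, h2.symm⟩
    · exact Or.inr (Or.inl ⟨h1.symm, h2.symm, h3.symm⟩)
    · exact Or.inr (Or.inr ⟨h1.symm, h2.symm, h3.symm⟩)
  loopless := by
    constructor
    rintro a (⟨_, h⟩ | ⟨h, _⟩ | ⟨h, _⟩)
    · exact X.irrefl h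
    · exact B.irrefl h
    · exact B.irrefl h

/-- The projection of the pullback bundle. -/
def pullbackProj {VB VX VC : Type*} (f : VB → VC) (p : VX → VC) :
    PullbackVert f p → VB := fun a => a.1.1

/-- Two graph bundles over the same base are equivalent. -/
def BundlesEquiv {VX VY VB : Type*} (X : SimpleGraph VX) (p : VX → VB)
    (Y : SimpleGraph VY) (q : VY → VB) : Prop :=
  ∃ Φ : X ≃g Y, ∀ x, q (Φ x) = p x

/-- A graph bundle is trivial if it is equivalent to `(B □ F, π, B)` with `π (v, f) = v`. -/
def IsTrivialBundle {VF VX VB : Type*} (F : SimpleGraph VF) (X : SimpleGraph VX)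
    (p : VX → VB) (B : SimpleGraph VB) : Prop :=
  ∃ Φ : X ≃g (B.boxProd F), ∀ x, (Φ x).1 = p x

/-- An `F`-voltage function on `B`. -/
structure VoltageFunction {VB VF : Type*} (B : SimpleGraph VB) (F : SimpleGraph VF) where
  volt : VB → VB → (F ≃g F)
  volt_symm : ∀ v w, volt w v = (volt v w).symm

/-- The graph `B ×_φ F` associated with a voltage function. -/
def voltageGraph {VB VF : Type*} (B : SimpleGraph VB) (F : SimpleGraph VF)
    (φ : VoltageFunction B F) : SimpleGraph (VB × VF) where
  Adj a b := (B.Adj a.1 b.1 ∧ b.2 = φ.volt a.1 b.1 a.2) ∨ (a.1 = b.1 ∧ F.Adj a.2 b.2)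
  symm := by
    constructor
    rintro a b (⟨h1, h2⟩ | ⟨h1, h2⟩)
    · refine Or.inl ⟨h1.symm, ?_⟩
      rw [φ.volt_symm, h2, RelIso.symm_apply_apply]
    · exact Or.inr ⟨h1.symm, h2.symm⟩
  loopless := by
    constructor
    rintro a (⟨h, _⟩ | ⟨_, h⟩)
    · exact B.irrefl h
    · exact F.irrefl h

/-- The pullback of a voltage function along a graph morphism. -/
def pullbackVoltage {VB VC VF : Type*} (B : SimpleGraph VB) (C : SimpleGraph VC)
    (F : SimpleGraph VF) (f : VB → VC) (φ : VoltageFunction C F) : VoltageFunction B F where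
  volt v w := if f v = f w then RelIso.refl _ else φ.volt (f v) (f w)
  volt_symm v w := by
    by_cases h : f v = f w
    · rw [if_pos h, if_pos h.symm]
      rfl
    · rw [if_neg h, if_neg (fun hh : f w = f v => h hh.symm), φ.volt_symm]
/-- Adjacency matrix (over `ℝ`). -/
def adjMat {V : Type*} (G : SimpleGraph V) : Matrix V V ℝ :=
  Matrix.of fun a b => if G.Adj a b then 1 else 0

/-- Permutation matrix of an automorphism of `F`. -/
def permMat {VF : Type*} {F : SimpleGraph VF} (ψ : F ≃g F) : Matrix VF VF ℝ :=
  Matrix.of fun a b => if b = ψ a then 1 else 0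

/-- The matrix `M_f` of a map of vertex sets. -/
def morMat {VB VC : Type*} (f : VB → VC) : Matrix VC VB ℝ :=
  Matrix.of fun c b => if f b = c then 1 else 0

/-- The matrix `A_B(ψ)` of a voltage function. -/
def voltMat {VB VF : Type*} {B : SimpleGraph VB} {F : SimpleGraph VF}
    (φ : VoltageFunction B F) (ψ : F ≃g F) : Matrix VB VB ℝ :=
  Matrix.of fun v w => if B.Adj v w ∧ φ.volt v w = ψ then 1 else 0

instance instFiniteGraphIso {VF : Type*} [Finite VF] (F : SimpleGraph VF) :
    Finite (F ≃g F) :=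
  Finite.of_injective (fun ψ => (ψ.toEquiv : VF ≃ VF)) (fun a b h => by
    cases a; cases b; simpa using h)

noncomputable instance instFintypeGraphIso {VF : Type*} [Finite VF] (F : SimpleGraph VF) :
    Fintype (F ≃g F) :=
  Fintype.ofFinite _

/-- The image graph `f(Γ)` of a graph morphism. -/
def imageGraph {VB VC : Type*} (B : SimpleGraph VB) (f : VB → VC) :
    SimpleGraph (Set.range f) where
  Adj a b := a.1 ≠ b.1 ∧ ∃ v w, B.Adj v w ∧ f v = a.1 ∧ f w = b.1
  symm := by
    constructor
    rintro a b ⟨hne, v, w, h, hv, hw⟩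
    exact ⟨hne.symm, w, v, h.symm, hw, hv⟩
  loopless := by
    constructor
    rintro a ⟨hne, -⟩
    exact hne rfl

/-- The Cayley graph of a group with respect to a set of generators. -/
def cayleyGraph {G : Type*} [Group G] (S : Set G) : SimpleGraph G :=
  SimpleGraph.fromRel (fun x y => ∃ s ∈ S, y = x * s)

/-- The subdirect product of two groups with amalgamated factor group `B`. -/
def subdirSubgroup {A₁ A₂ B : Type*} [Group A₁] [Group A₂] [Group B]
    (φ₁ : A₁ →* B) (φ₂ : A₂ →* B) : Subgroup (A₁ × A₂) where
  carrier := {a : A₁ × A₂ | φ₁ a.1 = φ₂ a.2}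
  one_mem' := by simp
  mul_mem' := by
    intro a b ha hb
    simp only [Set.mem_setOf_eq, Prod.fst_mul, Prod.snd_mul, _root_.map_mul] at *
    rw [ha, hb]
  inv_mem' := by
    intro a ha
    simp only [Set.mem_setOf_eq, Prod.fst_inv, Prod.snd_inv, _root_.map_inv] at *
    rw [ha]

/-!
A vertex of `X₁ ⊞ X₂` over `v` is a pair of vertices over `v`. An edge inside a fibre moves
exactly one coordinate inside its fibre, so the fibre over `v` is the Cartesian product of the two
fibres. An edge between distinct fibres moves both coordinates along edges lying over one and the
same base edge, so the covering bijections and the fibre transports of the two bundles combine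
coordinatewise.
-/

def SimpleGraph.Iso.boxProdCongr {α β γ δ : Type*} {G : SimpleGraph α} {H : SimpleGraph β}
    {G' : SimpleGraph γ} {H' : SimpleGraph δ} (e₁ : G ≃g G') (e₂ : H ≃g H') :
    G.boxProd H ≃g G'.boxProd H' where
  toEquiv := e₁.toEquiv.prodCongr e₂.toEquiv
  map_rel_iff' := by simp [SimpleGraph.Iso.map_adj_iff]

theorem Set.BijOn.pullbackVert {α β γ : Type*} {f : α → γ} {g : β → γ} {s : Set α} {t : Set β}
    {u : Set γ} (hf : Set.BijOn f s u) (hg : Set.BijOn g t u) :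
    Set.BijOn (fun a : PullbackVert f g => f a.1.1) {a | a.1.1 ∈ s ∧ a.1.2 ∈ t} u := by
  refine ⟨fun a ha => hf.mapsTo ha.1, ?_, fun w hw => ?_⟩
  · rintro ⟨⟨a₁, a₂⟩, ha⟩ ⟨ha₁, ha₂⟩ ⟨⟨b₁, b₂⟩, hb⟩ ⟨hb₁, hb₂⟩ (h : f a₁ = f b₁)
    have h₂ : g a₂ = g b₂ := ha.symm.trans (h.trans hb)
    exact Subtype.ext (Prod.ext (hf.injOn ha₁ hb₁ h) (hg.injOn ha₂ hb₂ h₂))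
  · obtain ⟨a₁, ha₁, rfl⟩ := hf.surjOn hw
    obtain ⟨a₂, ha₂, h⟩ := hg.surjOn hw
    exact ⟨⟨(a₁, a₂), h.symm⟩, ⟨ha₁, ha₂⟩, rfl⟩

section SubdirectProduct

variable {VX₁ VX₂ VB : Type*} {X₁ : SimpleGraph VX₁} {X₂ : SimpleGraph VX₂}
  {B : SimpleGraph VB} {p₁ : VX₁ → VB} {p₂ : VX₂ → VB}

variable (p₁ p₂) in
def subdirProj : PullbackVert p₁ p₂ → VB := fun a => p₁ a.1.1

theorem isGraphMorphism_subdirProj :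
    IsGraphMorphism (pullbackGraph X₁ X₂ p₁ p₂ B) B (subdirProj p₁ p₂) := by
  rintro a b (⟨h, -⟩ | ⟨-, h, -⟩ | ⟨-, h, -⟩)
  · exact Or.inr (congrArg p₁ h)
  · exact Or.inr h
  · exact Or.inl h

theorem subdirProj_surjective (h₁ : Function.Surjective p₁) (h₂ : Function.Surjective p₂) :
    Function.Surjective (subdirProj p₁ p₂) := by
  intro v
  obtain ⟨x₁, rfl⟩ := h₁ v
  obtain ⟨x₂, hx₂⟩ := h₂ (p₁ x₁)
  exact ⟨⟨(x₁, x₂), hx₂.symm⟩, rfl⟩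

variable (p₁ p₂) in
def subdirFiberEquiv (v : VB) :
    subdirProj p₁ p₂ ⁻¹' {v} ≃ (p₁ ⁻¹' {v}) × (p₂ ⁻¹' {v}) where
  toFun a := (⟨a.1.1.1, a.2⟩, ⟨a.1.1.2, a.1.2.symm.trans a.2⟩)
  invFun x := ⟨⟨(x.1.1, x.2.1), x.1.2.trans x.2.2.symm⟩, x.1.2⟩

theorem card_subdirProj_fiber (v : VB) :
    Nat.card (subdirProj p₁ p₂ ⁻¹' {v}) = Nat.card (p₁ ⁻¹' {v}) * Nat.card (p₂ ⁻¹' {v}) := by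
  rw [Nat.card_congr (subdirFiberEquiv p₁ p₂ v), Nat.card_prod]

variable (X₁ X₂ B p₁ p₂) in
def subdirFiberIso (v : VB) :
    (pullbackGraph X₁ X₂ p₁ p₂ B).induce (subdirProj p₁ p₂ ⁻¹' {v}) ≃g
      (X₁.induce (p₁ ⁻¹' {v})).boxProd (X₂.induce (p₂ ⁻¹' {v})) where
  toEquiv := subdirFiberEquiv p₁ p₂ v
  map_rel_iff' := by
    rintro ⟨⟨⟨a₁, a₂⟩, ha⟩, hav : p₁ a₁ = v⟩ ⟨⟨⟨b₁, b₂⟩, hb⟩, hbv : p₁ b₁ = v⟩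
    simp only [SimpleGraph.boxProd_adj, SimpleGraph.comap_adj, subdirFiberEquiv,
      Equiv.coe_fn_mk, Function.Embedding.subtype_apply]
    constructor
    · rintro (⟨h₁, h₂⟩ | ⟨h₂, h₁⟩)
      · exact Or.inr (Or.inl ⟨h₁, hav.trans hbv.symm, congrArg Subtype.val h₂⟩)
      · exact Or.inl ⟨congrArg Subtype.val h₁, h₂⟩
    · rintro (⟨h₁, h₂⟩ | ⟨h₁, -, h₂⟩ | ⟨-, hB, -⟩)
      · exact Or.inr ⟨h₂, Subtype.ext h₁⟩
      · exact Or.inl ⟨h₁, Subtype.ext h₂⟩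
      · exact absurd (hav.trans hbv.symm) hB.ne

theorem delFiberEdges_pullbackGraph_adj_iff (hp₁ : IsGraphMorphism X₁ B p₁)
    {a b : PullbackVert p₁ p₂} :
    (delFiberEdges (pullbackGraph X₁ X₂ p₁ p₂ B) (subdirProj p₁ p₂)).Adj a b ↔
      (delFiberEdges X₁ p₁).Adj a.1.1 b.1.1 ∧ (delFiberEdges X₂ p₂).Adj a.1.2 b.1.2 := by
  constructor
  · rintro ⟨(⟨h, -⟩ | ⟨-, h, -⟩ | ⟨h₁, hB, h₂⟩), hne⟩
    · exact absurd (congrArg p₁ h) hne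
    · exact absurd h hne
    · exact ⟨⟨h₁, hne⟩, h₂, by rw [← a.2, ← b.2]; exact hne⟩
  · rintro ⟨⟨h₁, hne⟩, h₂, -⟩
    exact ⟨Or.inr (Or.inr ⟨h₁, (hp₁ h₁).resolve_right hne, h₂⟩), hne⟩

theorem bijOn_subdirProj_neighborSet (hp₁ : IsGraphMorphism X₁ B p₁) (x : PullbackVert p₁ p₂)
    (hc₁ : Set.BijOn p₁ ((delFiberEdges X₁ p₁).neighborSet x.1.1)
      (B.neighborSet (p₁ x.1.1)))
    (hc₂ : Set.BijOn p₂ ((delFiberEdges X₂ p₂).neighborSet x.1.2)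
      (B.neighborSet (p₂ x.1.2))) :
    Set.BijOn (subdirProj p₁ p₂)
      ((delFiberEdges (pullbackGraph X₁ X₂ p₁ p₂ B) (subdirProj p₁ p₂)).neighborSet x)
      (B.neighborSet (subdirProj p₁ p₂ x)) := by
  have hN : (delFiberEdges (pullbackGraph X₁ X₂ p₁ p₂ B) (subdirProj p₁ p₂)).neighborSet x =
      {a | a.1.1 ∈ (delFiberEdges X₁ p₁).neighborSet x.1.1 ∧
        a.1.2 ∈ (delFiberEdges X₂ p₂).neighborSet x.1.2} :=
    Set.ext fun _ => delFiberEdges_pullbackGraph_adj_iff hp₁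
  rw [hN]
  rw [← x.2] at hc₂
  exact hc₁.pullbackVert hc₂

def subdirFiberTransport {v w : VB}
    (ψ₁ : X₁.induce (p₁ ⁻¹' {v}) ≃g X₁.induce (p₁ ⁻¹' {w}))
    (ψ₂ : X₂.induce (p₂ ⁻¹' {v}) ≃g X₂.induce (p₂ ⁻¹' {w})) :
    (pullbackGraph X₁ X₂ p₁ p₂ B).induce (subdirProj p₁ p₂ ⁻¹' {v}) ≃g
      (pullbackGraph X₁ X₂ p₁ p₂ B).induce (subdirProj p₁ p₂ ⁻¹' {w}) :=
  (subdirFiberIso X₁ X₂ B p₁ p₂ v).trans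
    ((SimpleGraph.Iso.boxProdCongr ψ₁ ψ₂).trans (subdirFiberIso X₁ X₂ B p₁ p₂ w).symm)

theorem adj_subdirFiberTransport {v w : VB} (hvw : B.Adj v w)
    {ψ₁ : X₁.induce (p₁ ⁻¹' {v}) ≃g X₁.induce (p₁ ⁻¹' {w})}
    {ψ₂ : X₂.induce (p₂ ⁻¹' {v}) ≃g X₂.induce (p₂ ⁻¹' {w})}
    (hψ₁ : ∀ x, X₁.Adj x.1 (ψ₁ x).1) (hψ₂ : ∀ x, X₂.Adj x.1 (ψ₂ x).1)
    (x : subdirProj p₁ p₂ ⁻¹' {v}) :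
    (pullbackGraph X₁ X₂ p₁ p₂ B).Adj x.1 (subdirFiberTransport (B := B) ψ₁ ψ₂ x).1 := by
  have hv : p₁ x.1.1.1 = v := x.2
  have hw : p₁ (ψ₁ ⟨x.1.1.1, x.2⟩).1 = w := (ψ₁ ⟨x.1.1.1, x.2⟩).2
  refine Or.inr (Or.inr ⟨hψ₁ ⟨x.1.1.1, x.2⟩, ?_, hψ₂ ⟨x.1.1.2, x.1.2.symm.trans x.2⟩⟩)
  change B.Adj (p₁ x.1.1.1) (p₁ (ψ₁ ⟨x.1.1.1, x.2⟩).1)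
  rwa [hv, hw]

end SubdirectProduct

theorem subdir_isGraphBundle_general
    {VF₁ VF₂ VX₁ VX₂ VB : Type*}
    (F₁ : SimpleGraph VF₁) (F₂ : SimpleGraph VF₂)
    (X₁ : SimpleGraph VX₁) (X₂ : SimpleGraph VX₂) (B : SimpleGraph VB)
    (p₁ : VX₁ → VB) (p₂ : VX₂ → VB)
    (h₁ : IsGraphBundle F₁ X₁ p₁ B) (h₂ : IsGraphBundle F₂ X₂ p₂ B) :
    IsGraphBundle (F₁.boxProd F₂) (pullbackGraph X₁ X₂ p₁ p₂ B)
      (fun a => p₁ a.1.1) B := by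
  refine
    { morphism := isGraphMorphism_subdirProj
      surj := subdirProj_surjective h₁.surj h₂.surj
      fiber_iso := fun v => ?_
      fiber_card := fun v => ?_
      covering := fun x =>
        bijOn_subdirProj_neighborSet h₁.morphism x (h₁.covering x.1.1) (h₂.covering x.1.2)
      transport := fun v w hvw => ?_ }
  · obtain ⟨e₁⟩ := h₁.fiber_iso v
    obtain ⟨e₂⟩ := h₂.fiber_iso v
    exact ⟨(subdirFiberIso X₁ X₂ B p₁ p₂ v).trans (SimpleGraph.Iso.boxProdCongr e₁ e₂)⟩
  · rw [Nat.card_prod, ← h₁.fiber_card v, ← h₂.fiber_card v]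
    exact card_subdirProj_fiber v
  · obtain ⟨ψ₁, hψ₁⟩ := h₁.transport hvw
    obtain ⟨ψ₂, hψ₂⟩ := h₂.transport hvw
    exact ⟨subdirFiberTransport ψ₁ ψ₂, adj_subdirFiberTransport hvw hψ₁ hψ₂⟩

/-- the subdirect product of two graph bundles over the same base is an
`F₁ □ F₂`-graph bundle. -/
theorem subdir_isGraphBundle
    {VF₁ VF₂ VX₁ VX₂ VB : Type*}
    [Fintype VF₁] [Fintype VF₂] [Fintype VX₁] [Fintype VX₂] [Fintype VB]
    (F₁ : SimpleGraph VF₁) (F₂ : SimpleGraph VF₂)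
    (X₁ : SimpleGraph VX₁) (X₂ : SimpleGraph VX₂) (B : SimpleGraph VB)
    (p₁ : VX₁ → VB) (p₂ : VX₂ → VB)
    (h₁ : IsGraphBundle F₁ X₁ p₁ B) (h₂ : IsGraphBundle F₂ X₂ p₂ B) :
    IsGraphBundle (F₁.boxProd F₂) (pullbackGraph X₁ X₂ p₁ p₂ B)
      (fun a => p₁ a.1.1) B :=
  subdir_isGraphBundle_general F₁ F₂ X₁ X₂ B p₁ p₂ h₁ h₂
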